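/- Let V, U, X, Y, T be discrete random variables with finite support on a common probability space. If V → U → X → Y forms a Markov chain and T is a sufficient statistic of X for U, then V → U → T → X → Y forms a Markov chain. -/

import Mathlib

/-!
Since `T = f(X)` almost surely, and conditional independence only sees almost sure
classes, it suffices to prove the claim for `f ∘ X` in place of `T`. Then `f(X) ⊥⊥ V | U`
is the image of `X ⊥⊥ V | U` under `f`, and `Y ⊥⊥ (V, U, f(X)) | X` holds because `f(X)`
is known once `X` is. The middle link `X ⊥⊥ (V, U) | f(X)` is the contraction of the
sufficiency `X ⊥⊥ U | f(X)` with `X ⊥⊥ V | (U, f(X))`, and the latter is the weak union of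
`(X, f(X)) ⊥⊥ V | U`.
-/

namespace Paper

/-- The probability of an event under a probability mass function. -/
noncomputable def pr {Ω : Type} (μ : PMF Ω) (E : Set Ω) : ENNReal :=
  μ.toOuterMeasure E

/-- Conditional independence `X ⊥⊥ Y | Z`:
`p(x,y,z) p(z) = p(x,z) p(y,z)` for all `x, y, z`. -/
def CondIndep {Ω α β γ : Type} (μ : PMF Ω) (X : Ω → α) (Y : Ω → β) (Z : Ω → γ) : Prop :=
  ∀ (x : α) (y : β) (z : γ),
    pr μ {ω | X ω = x ∧ Y ω = y ∧ Z ω = z} * pr μ {ω | Z ω = z}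
      = pr μ {ω | X ω = x ∧ Z ω = z} * pr μ {ω | Y ω = y ∧ Z ω = z}

/-- Unconditional independence `X ⊥⊥ Y`. -/
def Indep {Ω α β : Type} (μ : PMF Ω) (X : Ω → α) (Y : Ω → β) : Prop :=
  ∀ (x : α) (y : β),
    pr μ {ω | X ω = x ∧ Y ω = y} = pr μ {ω | X ω = x} * pr μ {ω | Y ω = y}

/-- `X ≥ι Y`: `X` functionally determines `Y` (with probability one). -/
def FunDep {Ω α β : Type} (μ : PMF Ω) (X : Ω → α) (Y : Ω → β) : Prop :=
  ∃ f : α → β, ∀ ω ∈ μ.support, Y ω = f (X ω)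

/-- `X =ι Y`: informational equivalence. -/
def InfoEq {Ω α β : Type} (μ : PMF Ω) (X : Ω → α) (Y : Ω → β) : Prop :=
  FunDep μ X Y ∧ FunDep μ Y X

/-- The random variable `X` has finite support. -/
def FinSupp {Ω α : Type} (μ : PMF Ω) (X : Ω → α) : Prop :=
  (X '' μ.support).Finite

/-- The random variable `X` has support of cardinality at most `ℓ`. -/
def CardLE {Ω α : Type} (μ : PMF Ω) (X : Ω → α) (ℓ : ℕ) : Prop :=
  ∃ s : Finset α, s.card ≤ ℓ ∧ ∀ ω ∈ μ.support, X ω ∈ s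

/-- `X` is uniformly distributed with support of cardinality `ℓ`. -/
def UniformCard {Ω α : Type} (μ : PMF Ω) (X : Ω → α) (ℓ : ℕ) : Prop :=
  ∃ S : Finset α, S.card = ℓ ∧ (∀ x ∈ S, pr μ {ω | X ω = x} = (ℓ : ENNReal)⁻¹) ∧
    ∀ x, x ∉ S → pr μ {ω | X ω = x} = 0

/-- The probability mass function of the random variable `X`. -/
noncomputable def distOf {Ω α : Type} (μ : PMF Ω) (X : Ω → α) : α → ENNReal :=
  fun x => pr μ {ω | X ω = x}

/-- `p ⪰ q` : `p` majorizes `q`, i.e. for every `k`, the sum of the `k` largest values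
of `p` is at least the sum of the `k` largest values of `q`. -/
def Majorizes (p q : ℕ → ENNReal) : Prop :=
  ∀ s : Finset ℕ, ∃ t : Finset ℕ, t.card ≤ s.card ∧ ∑ x ∈ s, q x ≤ ∑ x ∈ t, p x

/-- `T` is a sufficient statistic of `X` for `U`: `X ≥ι T` and `U ⊥⊥ X | T`. -/
def SuffStat {Ω α β γ : Type} (μ : PMF Ω) (X : Ω → α) (U : Ω → β) (T : Ω → γ) : Prop :=
  FunDep μ X T ∧ CondIndep μ U X T

/-- `T` is a minimal sufficient statistic of `X` for `U`. -/
def MinSuffStat {Ω α β γ : Type} (μ : PMF Ω) (X : Ω → α) (U : Ω → β) (T : Ω → γ) : Prop :=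
  SuffStat μ X U T ∧
    ∀ (δ : Type) (T' : Ω → δ), SuffStat μ X U T' → FunDep μ T' T

/-- Mutual independence of the subfamily `(V i)_{i ∈ s}`: each `V i` (for `i ∈ s`) is
independent of the joint variable of the others. -/
def MutIndepOn {Ω ι : Type} {β : ι → Type} (μ : PMF Ω) (V : ∀ i, Ω → β i)
    (s : Finset ι) : Prop :=
  ∀ i ∈ s, Indep μ (V i) (fun ω => fun j : {j // j ∈ s ∧ j ≠ i} => V j.1 ω)

/-- Mutual independence of the whole family `(V i)_i`. -/
def MutIndep {Ω ι : Type} {β : ι → Type} (μ : PMF Ω) (V : ∀ i, Ω → β i) : Prop :=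
  ∀ i, Indep μ (V i) (fun ω => fun j : {j // j ≠ i} => V j.1 ω)

/-- Mutual independence of `(V i)_{i ∈ C}` for a list `C` of indices. -/
def MutIndepL {Ω : Type} (μ : PMF Ω) (V : ℕ → Ω → ℕ) (C : List ℕ) : Prop :=
  ∀ i ∈ C, Indep μ (V i) (fun ω => fun j : {j // j ∈ C ∧ j ≠ i} => V j.1 ω)

/-- The joint random variable `(X a)_{a ∈ A}` for a list `A` of indices. -/
def jointOn {Ω : Type} (X : ℕ → Ω → ℕ) (A : List ℕ) : Ω → ({a : ℕ // a ∈ A} → ℕ) :=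
  fun ω a => X a.1 ω

/-- The joint random variable `(T i)_{i ∈ S}` for a finset `S` of indices. -/
def jointFin {Ω ι : Type} {β : ι → Type} (T : ∀ i, Ω → β i) (S : Finset ι) :
    Ω → ((i : {i // i ∈ S}) → β i.1) :=
  fun ω i => T i.1 ω

/-- The set of parents (in-neighbours) of `w` in the directed graph with edge relation `E`. -/
def parentSet {ν : Type} (E : ν → ν → Prop) (w : ν) : Set ν := {v | E v w}

/-- The set of nodes that are neither descendants nor parents of `w`. -/
def nonDescSet {ν : Type} (E : ν → ν → Prop) (w : ν) : Set ν :=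
  {v | ¬ Relation.ReflTransGen E w v ∧ ¬ E v w}

/-- The collection of random variables `(X v)_v` satisfies the Bayesian network structure
with edge relation `E`: each variable is conditionally independent of its
non-descendant non-parent variables given its parent variables. -/
def SatisfiesBN {Ω ν : Type} {β : ν → Type} (μ : PMF Ω) (X : ∀ v, Ω → β v)
    (E : ν → ν → Prop) : Prop :=
  ∀ w : ν, CondIndep μ (X w)
    (fun ω => fun v : nonDescSet E w => X v.1 ω)
    (fun ω => fun v : parentSet E w => X v.1 ω)

/-- `E` is (the edge list of) a directed acyclic graph on the nodes `{0, …, n-1}`. -/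
def IsDAG (n : ℕ) (E : List (ℕ × ℕ)) : Prop :=
  (∀ e ∈ E, e.1 < n ∧ e.2 < n) ∧
    ∀ i : ℕ, ¬ Relation.TransGen (fun a c => (a, c) ∈ E) i i

/-- The edge relation on `Fin n` determined by an edge list. -/
def edgeRelOn (n : ℕ) (E : List (ℕ × ℕ)) : Fin n → Fin n → Prop :=
  fun i j => ((i : ℕ), (j : ℕ)) ∈ E

/-- `(X_0, …, X_{n-1})` satisfies the Bayesian network given by the edge list `E`. -/
def SatisfiesBNn {Ω : Type} (μ : PMF Ω) (n : ℕ) (X : ℕ → Ω → ℕ)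
    (E : List (ℕ × ℕ)) : Prop :=
  SatisfiesBN μ (fun i : Fin n => X (i : ℕ)) (edgeRelOn n E)

/-- `(A, C, B) ∈ I(G_1, …, G_m)`: every collection of finitely supported discrete random
variables satisfying all the network structures in `Gs` satisfies `X_A ⊥⊥ X_B | X_C`. -/
def ImpliedCI (n : ℕ) (Gs : List (List (ℕ × ℕ))) (A C B : List ℕ) : Prop :=
  ∀ (Ω : Type) (μ : PMF Ω) (X : ℕ → Ω → ℕ),
    (∀ i, i < n → FinSupp μ (X i)) →
    (∀ G ∈ Gs, SatisfiesBNn μ n X G) →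
    CondIndep μ (jointOn X A) (jointOn X B) (jointOn X C)

/-- Two lists are disjoint as sets. -/
def DisjointL (A B : List ℕ) : Prop := ∀ a ∈ A, a ∉ B

end Paper
namespace Paper


section

variable {Ω α β γ δ : Type} {μ : PMF Ω}

theorem pr_ne_top (μ : PMF Ω) (E : Set Ω) : pr μ E ≠ ⊤ := by
  rw [pr, PMF.toOuterMeasure_apply]
  exact μ.tsum_coe_indicator_ne_top E

theorem pr_mono {E F : Set Ω} (h : E ⊆ F) : pr μ E ≤ pr μ F :=
  μ.toOuterMeasure.mono h

theorem pr_congr {E F : Set Ω} (h : ∀ ω ∈ μ.support, ω ∈ E ↔ ω ∈ F) : pr μ E = pr μ F :=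
  μ.toOuterMeasure_apply_eq_of_inter_support_eq <| by
    ext ω
    simp only [Set.mem_inter_iff]
    exact ⟨fun ⟨hE, hω⟩ => ⟨(h ω hω).1 hE, hω⟩, fun ⟨hF, hω⟩ => ⟨(h ω hω).2 hF, hω⟩⟩

theorem pr_empty : pr μ ∅ = 0 :=
  μ.toOuterMeasure.empty

theorem pr_eq_zero_of_subset {E F : Set Ω} (h : E ⊆ F) (hF : pr μ F = 0) : pr μ E = 0 :=
  le_antisymm (hF ▸ pr_mono h) zero_le

theorem pr_eq_tsum_inter_fiber (X : Ω → α) (E : Set Ω) :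
    pr μ E = ∑' x, pr μ (E ∩ {ω | X ω = x}) := by
  classical
  simp only [pr, PMF.toOuterMeasure_apply]
  rw [ENNReal.tsum_comm]
  refine tsum_congr fun ω => ?_
  rw [tsum_eq_single (X ω) fun x hx => Set.indicator_of_notMem (fun h => hx h.2.symm) _]
  simp only [Set.indicator_apply, Set.mem_inter_iff, Set.mem_ofPred_eq, and_true]

theorem pr_comp_eq_tsum [DecidableEq β] (X : Ω → α) (g : α → β) (b : β) (P : Ω → Prop) :
    pr μ {ω | g (X ω) = b ∧ P ω} = ∑' x, if g x = b then pr μ {ω | X ω = x ∧ P ω} else 0 := by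
  rw [pr_eq_tsum_inter_fiber X]
  refine tsum_congr fun x => ?_
  split_ifs with hx
  · congr 1
    ext ω
    simp only [Set.mem_inter_iff, Set.mem_ofPred_eq]
    constructor
    · rintro ⟨⟨-, hP⟩, rfl⟩; exact ⟨rfl, hP⟩
    · rintro ⟨rfl, hP⟩; exact ⟨⟨hx, hP⟩, rfl⟩
  · refine pr_eq_zero_of_subset (F := ∅) ?_ pr_empty
    rintro ω ⟨⟨hb, -⟩, rfl⟩
    exact hx hb

theorem mul_eq_mul_of_mul_pr_eq {a b : ENNReal} (μ : PMF Ω) (F : Set Ω)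
    (ha : pr μ F = 0 → a = 0) (hb : pr μ F = 0 → b = 0) (h : a * pr μ F = b * pr μ F) :
    a = b := by
  by_cases hF : pr μ F = 0
  · rw [ha hF, hb hF]
  · exact (ENNReal.mul_left_inj hF (pr_ne_top μ F)).1 h

namespace CondIndep

variable {X : Ω → α} {Y : Ω → β} {Z : Ω → γ}

theorem congr_ae {X' : Ω → α} {Y' : Ω → β} {Z' : Ω → γ}
    (hX : ∀ ω ∈ μ.support, X ω = X' ω) (hY : ∀ ω ∈ μ.support, Y ω = Y' ω)
    (hZ : ∀ ω ∈ μ.support, Z ω = Z' ω) (h : CondIndep μ X Y Z) : CondIndep μ X' Y' Z' := by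
  intro x y z
  convert h x y z using 2 <;>
    exact pr_congr fun ω hω => by simp [hX ω hω, hY ω hω, hZ ω hω]

theorem symm (h : CondIndep μ X Y Z) : CondIndep μ Y X Z := by
  intro y x z
  have := h x y z
  simp only [and_left_comm] at this ⊢
  rw [this, mul_comm]

theorem comp_left (g : α → δ) (h : CondIndep μ X Y Z) :
    CondIndep μ (fun ω => g (X ω)) Y Z := by
  classical
  intro d y z
  rw [pr_comp_eq_tsum X g d (fun ω => Y ω = y ∧ Z ω = z), pr_comp_eq_tsum X g d (fun ω => Z ω = z),
    ← ENNReal.tsum_mul_right, ← ENNReal.tsum_mul_right]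
  refine tsum_congr fun x => ?_
  split_ifs
  · exact h x y z
  · rw [zero_mul, zero_mul]

theorem comp_right (g : β → δ) (h : CondIndep μ X Y Z) :
    CondIndep μ X (fun ω => g (Y ω)) Z :=
  (h.symm.comp_left g).symm

theorem prod_cond (h : CondIndep μ X Y Z) : CondIndep μ X (fun ω => (Y ω, Z ω)) Z := by
  rintro x ⟨y, z'⟩ z
  simp only [Prod.mk.injEq]
  obtain rfl | hz := eq_or_ne z' z
  · simpa only [and_assoc, and_self] using h x y z'
  · have hZ : ∀ ω, ¬ (Z ω = z' ∧ Z ω = z) := fun ω ⟨h1, h2⟩ => hz (h1.symm.trans h2)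
    simp only [and_assoc, hZ, and_false, Set.ofPred_false, pr_empty, zero_mul, mul_zero]

theorem weak_union {W : Ω → δ} (h : CondIndep μ (fun ω => (X ω, W ω)) Y Z) :
    CondIndep μ X Y (fun ω => (Z ω, W ω)) := by
  rintro x y ⟨z, w⟩
  have hXW := h (x, w) y z
  have hW := h.comp_left Prod.snd w y z
  simp only [Prod.mk.injEq, and_assoc, and_comm, and_left_comm] at hXW hW ⊢
  set pXYZW := pr μ {ω | X ω = x ∧ Y ω = y ∧ Z ω = z ∧ W ω = w}
  set pYZW := pr μ {ω | Y ω = y ∧ Z ω = z ∧ W ω = w}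
  set pXZW := pr μ {ω | X ω = x ∧ Z ω = z ∧ W ω = w}
  set pZW := pr μ {ω | Z ω = z ∧ W ω = w}
  set pYZ := pr μ {ω | Y ω = y ∧ Z ω = z}
  refine mul_eq_mul_of_mul_pr_eq μ {ω | Z ω = z} (fun hz => ?_) (fun hz => ?_) ?_
  · rw [show pXYZW = 0 from pr_eq_zero_of_subset (fun ω hω => hω.2.2.1) hz, zero_mul]
  · rw [show pYZW = 0 from pr_eq_zero_of_subset (fun ω hω => hω.2.1) hz, mul_zero]
  · calc pXYZW * pZW * pr μ {ω | Z ω = z}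
        = pXYZW * pr μ {ω | Z ω = z} * pZW := by ring
      _ = pXZW * (pZW * pYZ) := by rw [hXW]; ring
      _ = pXZW * pYZW * pr μ {ω | Z ω = z} := by rw [← hW]; ring

theorem contraction {W : Ω → δ} (h₁ : CondIndep μ X W Z)
    (h₂ : CondIndep μ X Y (fun ω => (W ω, Z ω))) :
    CondIndep μ X (fun ω => (Y ω, W ω)) Z := by
  rintro x ⟨y, w⟩ z
  have h1 := h₁ x w z
  have h2 := h₂ x y (w, z)
  simp only [Prod.mk.injEq, and_comm, and_left_comm] at h1 h2 ⊢
  set pXYZW := pr μ {ω | X ω = x ∧ Y ω = y ∧ Z ω = z ∧ W ω = w}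
  set pYZW := pr μ {ω | Y ω = y ∧ Z ω = z ∧ W ω = w}
  set pXZW := pr μ {ω | X ω = x ∧ Z ω = z ∧ W ω = w}
  set pXZ := pr μ {ω | X ω = x ∧ Z ω = z}
  set pZ := pr μ {ω | Z ω = z}
  refine mul_eq_mul_of_mul_pr_eq μ {ω | Z ω = z ∧ W ω = w} (fun hzw => ?_) (fun hzw => ?_) ?_
  · rw [show pXYZW = 0 from pr_eq_zero_of_subset (fun ω hω => hω.2.2) hzw, zero_mul]
  · rw [show pYZW = 0 from pr_eq_zero_of_subset (fun ω hω => hω.2) hzw, mul_zero]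
  · calc pXYZW * pZ * pr μ {ω | Z ω = z ∧ W ω = w}
        = pXYZW * pr μ {ω | Z ω = z ∧ W ω = w} * pZ := by ring
      _ = pXZW * pZ * pYZW := by rw [h2]; ring
      _ = pXZ * pYZW * pr μ {ω | Z ω = z ∧ W ω = w} := by rw [h1]; ring

end CondIndep

end

theorem suffStat_insert_markov_general {Ω α β γ δ ε : Type}
    (μ : PMF Ω) (V : Ω → α) (U : Ω → β) (X : Ω → γ) (Y : Ω → δ) (T : Ω → ε)
    (h1 : CondIndep μ X V U)
    (h2 : CondIndep μ Y (fun ω => (V ω, U ω)) X)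
    (hss : SuffStat μ X U T) :
    CondIndep μ T V U ∧
    CondIndep μ X (fun ω => (V ω, U ω)) T ∧
    CondIndep μ Y (fun ω => (V ω, U ω, T ω)) X := by
  obtain ⟨⟨f, hf⟩, hUX⟩ := hss
  have hT : ∀ ω ∈ μ.support, f (X ω) = T ω := fun ω hω => (hf ω hω).symm
  have hXU : CondIndep μ X U (fun ω => f (X ω)) :=
    (hUX.congr_ae (fun _ _ => rfl) (fun _ _ => rfl) hf).symm
  have hXV : CondIndep μ X V (fun ω => (U ω, f (X ω))) :=
    (h1.comp_left fun x => (x, f x)).weak_union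
  refine ⟨?_, ?_, ?_⟩
  · exact (h1.comp_left f).congr_ae hT (fun _ _ => rfl) (fun _ _ => rfl)
  · exact (hXU.contraction hXV).congr_ae (fun _ _ => rfl) (fun _ _ => rfl) hT
  · exact (h2.prod_cond.comp_right fun p => (p.1.1, p.1.2, f p.2)).congr_ae
      (fun _ _ => rfl) (fun ω hω => by rw [hT ω hω]) (fun _ _ => rfl)

/-- Lemma 3 of the paper: if `V → U → X → Y` forms a Markov chain and `T` is a
sufficient statistic of `X` for `U`, then `V → U → T → X → Y` forms a Markov chain. -/
theorem suffStat_insert_markov {Ω α β γ δ ε : Type}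
    (μ : PMF Ω) (V : Ω → α) (U : Ω → β) (X : Ω → γ) (Y : Ω → δ) (T : Ω → ε)
    (hV : FinSupp μ V) (hU : FinSupp μ U) (hX : FinSupp μ X)
    (hY : FinSupp μ Y) (hT : FinSupp μ T)
    (h1 : CondIndep μ X V U)
    (h2 : CondIndep μ Y (fun ω => (V ω, U ω)) X)
    (hss : SuffStat μ X U T) :
    CondIndep μ T V U ∧
    CondIndep μ X (fun ω => (V ω, U ω)) T ∧
    CondIndep μ Y (fun ω => (V ω, U ω, T ω)) X :=
  suffStat_insert_markov_general μ V U X Y T h1 h2 hss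

end Paper
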